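/- arXiv:2407.20918 — 2 statements merged into one kernel-verified Lean document; each statement's English description precedes it below -/
import Mathlib

section
/- Let Ω be a nonempty finite type and let E = ⟨𝓔, mod⟩ be an epistemic space over Ω. If E satisfies (ZC), then there exists a linear contraction operator for E. -/
open Set

/-- `minSet r S` is the set of `r`-minimal elements of `S`:
`min(S, r) = {ω ∈ S : r ω ω' for all ω' ∈ S}`. -/
def minSet {Ω : Type*} (r : Ω → Ω → Prop) (S : Set Ω) : Set Ω :=
  {ω ∈ S | ∀ ω' ∈ S, r ω ω'}

/-- A linear order as a relation: total, antisymmetric and transitive. -/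
def IsLinRel {Ω : Type*} (r : Ω → Ω → Prop) : Prop :=
  (∀ a b, r a b ∨ r b a) ∧ (∀ a b, r a b → r b a → a = b) ∧
    (∀ a b c, r a b → r b c → r a c)

/-- AGM contraction operator for the epistemic space `⟨E, md⟩` (postulates C1–C7,
formulated on model sets). -/
def IsContraction {Ω E : Type*} (md : E → Set Ω) (c : E → Set Ω → E) : Prop :=
  ∀ (Ψ : E) (A B : Set Ω),
    md Ψ ⊆ md (c Ψ A) ∧
    (¬ md Ψ ⊆ A → md (c Ψ A) ⊆ md Ψ) ∧
    (A ≠ Set.univ → ¬ md (c Ψ A) ⊆ A) ∧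
    md (c Ψ A) ∩ A ⊆ md Ψ ∧
    md (c Ψ (A ∩ B)) ⊆ md (c Ψ A) ∪ md (c Ψ B) ∧
    (¬ md (c Ψ (A ∩ B)) ⊆ B → md (c Ψ B) ⊆ md (c Ψ (A ∩ B)))

/-- AGM revision operator for the epistemic space `⟨E, md⟩` (postulates R1–R6,
formulated on model sets). -/
def IsRevision {Ω E : Type*} (md : E → Set Ω) (s : E → Set Ω → E) : Prop :=
  ∀ (Ψ : E) (A B : Set Ω),
    md (s Ψ A) ⊆ A ∧
    (md Ψ ∩ A ≠ ∅ → md (s Ψ A) = md Ψ ∩ A) ∧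
    (A ≠ ∅ → md (s Ψ A) ≠ ∅) ∧
    md (s Ψ A) ∩ B ⊆ md (s Ψ (A ∩ B)) ∧
    (md (s Ψ A) ∩ B ≠ ∅ → md (s Ψ (A ∩ B)) ⊆ md (s Ψ A) ∩ B)

/-- Postulate (ZC). -/
def ZC {Ω E : Type*} (md : E → Set Ω) : Prop :=
  ∀ (Ψ : E) (M : Set Ω), md Ψ ⊆ M → ∃ Ψ' : E, md Ψ' = M

/-- Postulate (ZR1). -/
def ZR1 {Ω E : Type*} (md : E → Set Ω) : Prop :=
  ∀ ω : Ω, ∃ Ψ : E, md Ψ = {ω}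

/-- Postulate (ZR2). -/
def ZR2 {Ω E : Type*} (md : E → Set Ω) : Prop :=
  ∀ (Ψ : E) (M : Set Ω), M ⊆ md Ψ → ∃ Ψ' : E, md Ψ' = M

/-- Postulate (Unbiased). -/
def Unbiased {Ω E : Type*} (md : E → Set Ω) : Prop :=
  ∀ M : Set Ω, ∃ Ψ : E, md Ψ = M

/-- Maxichoice contraction operator. -/
def IsMaxichoiceContraction {Ω E : Type*} (md : E → Set Ω) (c : E → Set Ω → E) : Prop :=
  IsContraction md c ∧
    ∀ Ψ : E, ∃ r : Ω → Ω → Prop, IsLinRel r ∧ ∀ A : Set Ω,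
      (¬ md Ψ ⊆ A → md (c Ψ A) = md Ψ) ∧
      (md Ψ ⊆ A → md (c Ψ A) = md Ψ ∪ minSet r Aᶜ)

/-- Linear contraction operator: a maxichoice contraction operator based on one
single linear order for all epistemic states. -/
def IsLinearContraction {Ω E : Type*} (md : E → Set Ω) (c : E → Set Ω → E) : Prop :=
  IsContraction md c ∧
    ∃ r : Ω → Ω → Prop, IsLinRel r ∧ ∀ (Ψ : E) (A : Set Ω),
      (¬ md Ψ ⊆ A → md (c Ψ A) = md Ψ) ∧
      (md Ψ ⊆ A → md (c Ψ A) = md Ψ ∪ minSet r Aᶜ)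

/-- Full meet contraction operator. -/
def IsFullMeetContraction {Ω E : Type*} (md : E → Set Ω) (c : E → Set Ω → E) : Prop :=
  IsContraction md c ∧
    ∀ (Ψ : E) (A : Set Ω),
      (¬ md Ψ ⊆ A → md (c Ψ A) = md Ψ) ∧
      (md Ψ ⊆ A → md (c Ψ A) = md Ψ ∪ Aᶜ)

/-- Maxichoice revision operator. -/
def IsMaxichoiceRevision {Ω E : Type*} (md : E → Set Ω) (s : E → Set Ω → E) : Prop :=
  IsRevision md s ∧
    ∀ Ψ : E, ∃ r : Ω → Ω → Prop, IsLinRel r ∧ ∀ A : Set Ω,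
      (md Ψ ∩ A ≠ ∅ → md (s Ψ A) = md Ψ ∩ A) ∧
      (md Ψ ∩ A = ∅ → md (s Ψ A) = minSet r A)

/-- Linear revision operator: a maxichoice revision operator based on one single
linear order for all epistemic states. -/
def IsLinearRevision {Ω E : Type*} (md : E → Set Ω) (s : E → Set Ω → E) : Prop :=
  IsRevision md s ∧
    ∃ r : Ω → Ω → Prop, IsLinRel r ∧ ∀ (Ψ : E) (A : Set Ω),
      (md Ψ ∩ A ≠ ∅ → md (s Ψ A) = md Ψ ∩ A) ∧
      (md Ψ ∩ A = ∅ → md (s Ψ A) = minSet r A)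

/-- Full meet revision operator. -/
def IsFullMeetRevision {Ω E : Type*} (md : E → Set Ω) (s : E → Set Ω → E) : Prop :=
  IsRevision md s ∧
    ∀ (Ψ : E) (A : Set Ω),
      (md Ψ ∩ A ≠ ∅ → md (s Ψ A) = md Ψ ∩ A) ∧
      (md Ψ ∩ A = ∅ → md (s Ψ A) = A)


/-
The models of `Ψ ÷ A` are prescribed as `mod Ψ ∪ min(Ω \ A, ≤)` for one well-order `≤` of `Ω`
(Zermelo), whenever `mod Ψ ⊆ A`, and as `mod Ψ` otherwise. Each prescribed set contains `mod Ψ`,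
so (ZC) provides an epistemic state realising it. The postulates then only concern these model
sets; the non-obvious ones, (C6) and (C7), hold because the least element of `(A ∩ B)ᶜ = Aᶜ ∪ Bᶜ`
is the least element of `Aᶜ` or of `Bᶜ`, and least elements are unique.
-/

section minSet

variable {α : Type*}

theorem minSet_subset (r : α → α → Prop) (S : Set α) : minSet r S ⊆ S :=
  fun _ hx => hx.1

theorem minSet_union_subset (r : α → α → Prop) (S T : Set α) :
    minSet r (S ∪ T) ⊆ minSet r S ∪ minSet r T := by
  rintro x ⟨hS | hT, hmin⟩
  · exact Or.inl ⟨hS, fun y hy => hmin y (Or.inl hy)⟩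
  · exact Or.inr ⟨hT, fun y hy => hmin y (Or.inr hy)⟩

theorem minSet_inter_subset_minSet_of_subset (r : α → α → Prop) {S T : Set α} (hTS : T ⊆ S) :
    minSet r S ∩ T ⊆ minSet r T :=
  fun _ ⟨hx, hxT⟩ => ⟨hxT, fun y hy => hx.2 y (hTS hy)⟩

variable [LinearOrder α]

theorem isLinRel_le : IsLinRel (fun a b : α => a ≤ b) :=
  ⟨le_total, fun _ _ => le_antisymm, fun _ _ _ => le_trans⟩

theorem minSet_le_subsingleton (S : Set α) : (minSet (· ≤ ·) S).Subsingleton :=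
  fun x hx y hy => le_antisymm (hx.2 y hy.1) (hy.2 x hx.1)

theorem minSet_le_nonempty [WellFoundedLT α] {S : Set α} (hS : S.Nonempty) :
    (minSet (· ≤ ·) S).Nonempty :=
  ⟨_, wellFounded_lt.min_mem S hS, fun _ hy => wellFounded_lt.min_le hy⟩

end minSet

section linearContraction

variable {α : Type*} [LinearOrder α]

open Classical in
noncomputable def linearContractionModels (K A : Set α) : Set α :=
  if K ⊆ A then K ∪ minSet (· ≤ ·) Aᶜ else K

variable {K A B : Set α}

theorem subset_linearContractionModels : K ⊆ linearContractionModels K A := by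
  unfold linearContractionModels
  split_ifs
  exacts [subset_union_left, subset_rfl]

theorem linearContractionModels_of_subset (h : K ⊆ A) :
    linearContractionModels K A = K ∪ minSet (· ≤ ·) Aᶜ :=
  if_pos h

theorem linearContractionModels_of_not_subset (h : ¬ K ⊆ A) :
    linearContractionModels K A = K :=
  if_neg h

theorem linearContractionModels_inter_subset : linearContractionModels K A ∩ A ⊆ K := by
  by_cases h : K ⊆ A
  · rw [linearContractionModels_of_subset h]
    rintro x ⟨hxK | hxmin, hxA⟩
    exacts [hxK, absurd hxA (minSet_subset _ _ hxmin)]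
  · rw [linearContractionModels_of_not_subset h]
    exact inter_subset_left

theorem linearContractionModels_not_subset [WellFoundedLT α] (hA : A ≠ univ) :
    ¬ linearContractionModels K A ⊆ A := by
  intro hsub
  by_cases h : K ⊆ A
  · obtain ⟨m, hm⟩ := minSet_le_nonempty (nonempty_compl.mpr hA)
    rw [linearContractionModels_of_subset h] at hsub
    exact minSet_subset _ _ hm (hsub (Or.inr hm))
  · rw [linearContractionModels_of_not_subset h] at hsub
    exact h hsub

theorem linearContractionModels_inter_subset_union :
    linearContractionModels K (A ∩ B) ⊆
      linearContractionModels K A ∪ linearContractionModels K B := by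
  by_cases h : K ⊆ A ∩ B
  · rw [linearContractionModels_of_subset h, linearContractionModels_of_subset
      (h.trans inter_subset_left), linearContractionModels_of_subset (h.trans inter_subset_right),
      compl_inter]
    refine union_subset (subset_union_left.trans subset_union_left) ?_
    exact (minSet_union_subset _ _ _).trans
      (union_subset_union subset_union_right subset_union_right)
  · rw [linearContractionModels_of_not_subset h]
    exact subset_linearContractionModels.trans subset_union_left

theorem linearContractionModels_subset_of_not_subset
    (hB : ¬ linearContractionModels K (A ∩ B) ⊆ B) :
    linearContractionModels K B ⊆ linearContractionModels K (A ∩ B) := by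
  by_cases h : K ⊆ A ∩ B
  · have hKB : K ⊆ B := h.trans inter_subset_right
    rw [linearContractionModels_of_subset h] at hB ⊢
    rw [linearContractionModels_of_subset hKB]
    obtain ⟨m, hm, hmB⟩ := not_subset.mp hB
    have hm' : m ∈ minSet (· ≤ ·) (A ∩ B)ᶜ := hm.resolve_left fun hmK => hmB (hKB hmK)
    have hmin : m ∈ minSet (· ≤ ·) Bᶜ :=
      minSet_inter_subset_minSet_of_subset _ (compl_subset_compl.mpr inter_subset_right) ⟨hm', hmB⟩
    refine union_subset subset_union_left fun x hx => Or.inr ?_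
    rwa [minSet_le_subsingleton _ hx hmin]
  · rw [linearContractionModels_of_not_subset h] at hB ⊢
    rw [linearContractionModels_of_not_subset hB]

theorem isLinearContraction_of_models_eq [WellFoundedLT α] {E : Type*} {md : E → Set α}
    {c : E → Set α → E} (hc : ∀ Ψ A, md (c Ψ A) = linearContractionModels (md Ψ) A) :
    IsLinearContraction md c := by
  refine ⟨fun Ψ A B => ?_, (· ≤ ·), isLinRel_le, fun Ψ A => ?_⟩
  · simp only [hc]
    exact ⟨subset_linearContractionModels, fun h => (linearContractionModels_of_not_subset h).le,
      linearContractionModels_not_subset, linearContractionModels_inter_subset,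
      linearContractionModels_inter_subset_union, linearContractionModels_subset_of_not_subset⟩
  · rw [hc]
    exact ⟨linearContractionModels_of_not_subset, linearContractionModels_of_subset⟩

end linearContraction

theorem exists_linearContraction_of_ZC_general {Ω E : Type*}
    (md : E → Set Ω)
    (hZC : ZC md) :
    ∃ c : E → Set Ω → E, IsLinearContraction md c := by
  obtain ⟨_, _⟩ := exists_wellFoundedLT Ω
  choose realise hrealise using hZC
  exact ⟨fun Ψ A => realise Ψ (linearContractionModels (md Ψ) A) subset_linearContractionModels,
    isLinearContraction_of_models_eq fun Ψ A => hrealise _ _ _⟩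

/-- If `⟨E, md⟩` satisfies (ZC), then there exists a linear
contraction operator for `⟨E, md⟩`. -/
theorem exists_linearContraction_of_ZC {Ω E : Type*} [Fintype Ω] [Nonempty Ω] [Nonempty E]
    (md : E → Set Ω)
    (hZC : ZC md) :
    ∃ c : E → Set Ω → E, IsLinearContraction md c :=
  exists_linearContraction_of_ZC_general md hZC
end

section
/- There is an epistemic space for which there exist strictly more AGM contraction operators than AGM revision operators; concretely, for the epistemic space E¹ = ⟨𝓔₁, mod⟩, the set of AGM contraction operators for E¹ has strictly greater cardinality than the set of AGM revision operators for E¹ (the latter set being empty while the former is nonempty). -/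
/-!
Postulate (R1) for the inconsistent input `∅` forces `Ψ ★ ∅` to have no models, and every
state of `E¹` has a model, so `E¹` has no revision operator. On the other hand `E¹` has a state
for every consistent model set, so the full meet contraction `mod Ψ ∪ Aᶜ` (for `mod Ψ ⊆ A`)
is realised by a contraction operator.
-/

open Set

/-- The epistemic space `E¹` over `Ω₁ = Fin 2` (worlds `ω₁, ω₂`): three states
`Ψ₁, Ψ₂, Ψ_⊤` with `mod Ψ₁ = {ω₁}`, `mod Ψ₂ = {ω₂}` and `mod Ψ_⊤ = Ω₁`. -/
def md1 : Fin 3 → Set (Fin 2) := ![{0}, {1}, Set.univ]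

section EpistemicSpace

variable {Ω E : Type*} {md : E → Set Ω}

theorem not_isRevision_of_nonempty [Nonempty E] (hmd : ∀ Ψ, (md Ψ).Nonempty)
    (s : E → Set Ω → E) : ¬ IsRevision md s := by
  intro hs
  obtain ⟨Ψ⟩ := ‹Nonempty E›
  obtain ⟨ω, hω⟩ := hmd (s Ψ ∅)
  exact (hs Ψ ∅ ∅).1 hω

open Classical in
noncomputable def fullMeetModels (K A : Set Ω) : Set Ω :=
  if K ⊆ A then K ∪ Aᶜ else K

theorem subset_fullMeetModels (K A : Set Ω) : K ⊆ fullMeetModels K A := by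
  unfold fullMeetModels
  split_ifs <;> simp

theorem isContraction_of_md_eq_fullMeetModels {c : E → Set Ω → E}
    (hc : ∀ Ψ A, md (c Ψ A) = fullMeetModels (md Ψ) A) : IsContraction md c := by
  intro Ψ A B
  simp only [hc]
  refine ⟨subset_fullMeetModels _ _, ?_, ?_, ?_, ?_, ?_⟩ <;> unfold fullMeetModels
  · intro h
    simp [h]
  · intro hA
    split_ifs with h
    · exact fun h' => hA (compl_le_self.mp (union_subset_iff.mp h').2)
    · exact h
  all_goals split_ifs <;> tauto_set

theorem exists_isContraction_of_ZC (hmd : ZC md) : ∃ c : E → Set Ω → E, IsContraction md c := by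
  choose Ψ' hΨ' using fun Ψ A => hmd Ψ (fullMeetModels (md Ψ) A) (subset_fullMeetModels _ _)
  exact ⟨Ψ', isContraction_of_md_eq_fullMeetModels hΨ'⟩

end EpistemicSpace

theorem md1_nonempty (Ψ : Fin 3) : (md1 Ψ).Nonempty := by
  fin_cases Ψ <;> simp [md1]

theorem exists_md1_eq_of_nonempty {M : Set (Fin 2)} (hM : M.Nonempty) : ∃ Ψ, md1 Ψ = M := by
  by_cases h0 : (0 : Fin 2) ∈ M <;> by_cases h1 : (1 : Fin 2) ∈ M
  · exact ⟨2, by ext x; fin_cases x <;> simp [md1, h0, h1]⟩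
  · exact ⟨0, by ext x; fin_cases x <;> simp [md1, h0, h1]⟩
  · exact ⟨1, by ext x; fin_cases x <;> simp [md1, h0, h1]⟩
  · obtain ⟨x, hx⟩ := hM
    fin_cases x <;> contradiction

theorem md1_ZC : ZC md1 := fun Ψ _ hM => exists_md1_eq_of_nonempty ((md1_nonempty Ψ).mono hM)

/-- For the epistemic space `E¹` there are strictly more AGM
contraction operators than AGM revision operators: the set of revision
operators is empty, the set of contraction operators is nonempty, and hence
the former has strictly smaller cardinality than the latter. -/
theorem E1_more_contractions_than_revisions :
    (¬ ∃ s : Fin 3 → Set (Fin 2) → Fin 3, IsRevision md1 s) ∧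
      (∃ c : Fin 3 → Set (Fin 2) → Fin 3, IsContraction md1 c) ∧
      Cardinal.mk {s : Fin 3 → Set (Fin 2) → Fin 3 // IsRevision md1 s} <
        Cardinal.mk {c : Fin 3 → Set (Fin 2) → Fin 3 // IsContraction md1 c} := by
  have no_revision : ¬ ∃ s, IsRevision md1 s := fun ⟨s, hs⟩ =>
    not_isRevision_of_nonempty md1_nonempty s hs
  obtain ⟨c, hc⟩ := exists_isContraction_of_ZC md1_ZC
  refine ⟨no_revision, ⟨c, hc⟩, ?_⟩
  rw [Cardinal.mk_eq_zero_iff.mpr ⟨fun s => no_revision ⟨_, s.2⟩⟩]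
  exact (Cardinal.mk_ne_zero_iff.mpr ⟨⟨c, hc⟩⟩).bot_lt
end
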